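/- Let V⁺, V⁻ be complex vector spaces with internal direct sum decompositions V⁺ = K⁺ ⊕ L⁺ and V⁻ = K⁻ ⊕ L⁻. Let D : V⁺ → V⁻ be a linear map with D(K⁺) ⊆ K⁻ and D(L⁺) ⊆ L⁻, and suppose the restriction D|_{K⁺} : K⁺ → K⁻ is a linear isomorphism. Let P₊ : V⁺ → L⁺ be the projection with kernel K⁺ and i₋ : L⁻ → V⁻ the inclusion. Then for every nonzero scalar z ∈ ℂ, the linear map 𝒟(z) : V⁺ × L⁻ → V⁻ × L⁺ defined by 𝒟(z)(v, l) = (D v + z • i₋ l, z • P₊ v) is bijective. -/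

import Mathlib

/-!
Split `v = k + u` along `K⁺ ⊕ L⁺` and the target along `K⁻ ⊕ L⁻`. In these coordinates `𝒟(z)`
is block triangular: the `K⁻`-component of `D v + z • l` is `D k`, its `L⁻`-component is
`D u + z • l`, and the `L⁺`-component is `z • u`. The diagonal blocks `D|_{K⁺}`, `z` and `z` are
invertible, hence so is `𝒟(z)`.
-/

namespace LinearMap

open Submodule

variable {𝕜 V W : Type*} [Field 𝕜] [AddCommGroup V] [Module 𝕜 V] [AddCommGroup W] [Module 𝕜 W]
  {Kp Lp : Submodule 𝕜 V} {Km Lm : Submodule 𝕜 W}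

/-- The Mišcenko–Fomenko perturbation `𝒟(z)` of `D`. -/
noncomputable def mfPerturbation (D : V →ₗ[𝕜] W) (hp : IsCompl Kp Lp) (Lm : Submodule 𝕜 W)
    (z : 𝕜) : V × Lm →ₗ[𝕜] W × Lp :=
  (D ∘ₗ fst 𝕜 V Lm + z • Lm.subtype ∘ₗ snd 𝕜 V Lm).prod
    (z • Lp.projectionOnto Kp hp.symm ∘ₗ fst 𝕜 V Lm)

theorem mfPerturbation_apply (D : V →ₗ[𝕜] W) (hp : IsCompl Kp Lp) (z : 𝕜) (p : V × Lm) :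
    D.mfPerturbation hp Lm z p = (D p.1 + z • (p.2 : W), z • Lp.projectionOnto Kp hp.symm p.1) :=
  rfl

theorem injective_mfPerturbation (hp : IsCompl Kp Lp) (hm : Disjoint Km Lm) {D : V →ₗ[𝕜] W}
    (hDK : ∀ x ∈ Kp, D x ∈ Km) (hinj : Function.Injective (D.restrict hDK)) {z : 𝕜}
    (hz : z ≠ 0) : Function.Injective (D.mfPerturbation hp Lm z) := by
  refine (injective_iff_map_eq_zero _).2 fun ⟨v, l⟩ h => ?_
  simp only [mfPerturbation_apply, Prod.mk_eq_zero, smul_eq_zero, hz, false_or] at h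
  obtain ⟨hsum, hPv⟩ := h
  have hvK : v ∈ Kp := (projectionOnto_apply_eq_zero_iff hp.symm).1 hPv
  have hDvL : D v ∈ Lm := by
    rw [eq_neg_of_add_eq_zero_left hsum]
    exact Lm.neg_mem (Lm.smul_mem z l.2)
  have hDv : D v = 0 := disjoint_def.1 hm _ (hDK v hvK) hDvL
  have hv : v = 0 := congrArg Subtype.val <|
    (injective_iff_map_eq_zero _).1 hinj ⟨v, hvK⟩ (Subtype.ext hDv)
  rw [hDv, zero_add, smul_eq_zero, ZeroMemClass.coe_eq_zero] at hsum
  simp [hv, hsum.resolve_left hz]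

theorem surjective_mfPerturbation (hp : IsCompl Kp Lp) (hm : Codisjoint Km Lm)
    {D : V →ₗ[𝕜] W} (hDK : ∀ x ∈ Kp, D x ∈ Km) (hDL : ∀ x ∈ Lp, D x ∈ Lm)
    (hsurj : Function.Surjective (D.restrict hDK)) {z : 𝕜} (hz : z ≠ 0) :
    Function.Surjective (D.mfPerturbation hp Lm z) := by
  rintro ⟨w, l'⟩
  obtain ⟨wK, wL, hwK, hwL, rfl⟩ := codisjoint_iff_exists_add_eq.1 hm w
  obtain ⟨⟨k, hk⟩, hkw⟩ := hsurj ⟨wK, hwK⟩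
  have hDk : D k = wK := congrArg Subtype.val hkw
  have huL : z⁻¹ • (l' : V) ∈ Lp := Lp.smul_mem _ l'.2
  refine ⟨(k + z⁻¹ • (l' : V),
    ⟨z⁻¹ • (wL - D (z⁻¹ • (l' : V))), Lm.smul_mem _ (Lm.sub_mem hwL (hDL _ huL))⟩), ?_⟩
  rw [mfPerturbation_apply, map_add, map_add, projectionOnto_apply_of_mem_right hp.symm hk,
    projectionOnto_apply_of_mem_left hp.symm huL, hDk]
  ext
  · simp only [smul_smul, mul_inv_cancel₀ hz, one_smul]
    abel
  · simp [smul_smul, mul_inv_cancel₀ hz]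

end LinearMap

theorem stmt6 {Vp Vm : Type*}
    [AddCommGroup Vp] [Module ℂ Vp] [AddCommGroup Vm] [Module ℂ Vm]
    (Kp Lp : Submodule ℂ Vp) (Km Lm : Submodule ℂ Vm)
    (hp : IsCompl Kp Lp) (hm : IsCompl Km Lm)
    (D : Vp →ₗ[ℂ] Vm)
    (hDK : ∀ x ∈ Kp, D x ∈ Km) (hDL : ∀ x ∈ Lp, D x ∈ Lm)
    (hKiso : Function.Bijective (D.restrict hDK)) :
    ∀ z : ℂ, z ≠ 0 →
      Function.Bijective
        (fun p : Vp × Lm =>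
          ((D p.1 + z • (p.2 : Vm),
            z • (Lp.linearProjOfIsCompl Kp hp.symm) p.1) : Vm × Lp)) :=
  fun _ hz => ⟨LinearMap.injective_mfPerturbation hp hm.disjoint hDK hKiso.1 hz,
    LinearMap.surjective_mfPerturbation hp hm.codisjoint hDK hDL hKiso.2 hz⟩
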